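/- Let F be a countable graph with no finite dominating set. Then for every edge e of the Rado graph R there exists a graph embedding σ_e of F into R (an isomorphism of F onto the subgraph σ_e(F) of R) such that: (1) σ_e(F) is a spanning subgraph of R containing the edge e; and (2) the graph R \ σ_e(F), obtained from R by deleting the edges of σ_e(F), is isomorphic to R. -/

import Mathlib

/-!
A countable graph with the extension property is determined up to isomorphism by a back-and-forth
argument, and `R` has it. So it suffices to enumerate the vertices of `F` bijectively by `ℕ` so
that edges go to edges of `R`, the chosen edge of `F` goes to `e`, and `R \ Γ` has the extension
property. The bijection is the union of a generic chain of finite partial embeddings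
(Rasiowa–Sikorski). A vertex of `F` is placed by the extension property of `R`; a vertex of `R` is
covered by a vertex of `F` with no neighbour among those already placed, which exists because no
finite set dominates `F`. A requirement `(A, B)` for `R \ Γ` is met by first covering `A`, and
then sending such a non-adjacent vertex of `F` to a vertex that the extension property of `R`
provides for `(A, B)`: it is adjacent to `A` in `R` but not in `Γ`.
-/

/-- The Rado graph on `ℕ`: for `i < j`, `i` and `j` are adjacent iff the `i`-th bit
of the binary representation of `j` is `1`. -/
def Rado : SimpleGraph ℕ :=
  SimpleGraph.fromRel (fun i j => i < j ∧ Nat.testBit j i)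

/-- A set `D` of vertices is dominating if every vertex not in `D` is adjacent to
some vertex of `D`. -/
def IsDominatingSet {V : Type*} (F : SimpleGraph V) (D : Set V) : Prop :=
  ∀ v ∉ D, ∃ d ∈ D, F.Adj v d

open Finset

section PartialInj

variable {α β : Type*}

def IsPartialInj (f : Finset (α × β)) : Prop :=
  ∀ p ∈ f, ∀ q ∈ f, p.1 = q.1 ↔ p.2 = q.2

namespace IsPartialInj

variable [DecidableEq α] [DecidableEq β] {f : Finset (α × β)}

theorem insert (hf : IsPartialInj f) {a : α} {b : β} (ha : a ∉ f.image Prod.fst)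
    (hb : b ∉ f.image Prod.snd) : IsPartialInj (insert (a, b) f) := by
  have ha' : ∀ q ∈ f, a ≠ q.1 := fun q hq h => ha (mem_image.2 ⟨q, hq, h.symm⟩)
  have hb' : ∀ q ∈ f, b ≠ q.2 := fun q hq h => hb (mem_image.2 ⟨q, hq, h.symm⟩)
  simp only [IsPartialInj, forall_mem_insert]
  exact ⟨⟨trivial, fun q hq => iff_of_false (ha' q hq) (hb' q hq)⟩,
    fun p hp => ⟨iff_of_false (ha' p hp).symm (hb' p hp).symm, hf p hp⟩⟩

theorem image_swap (hf : IsPartialInj f) : IsPartialInj (f.image Prod.swap) := by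
  simp only [IsPartialInj, forall_mem_image]
  exact fun p hp q hq => (hf p hp q hq).symm

end IsPartialInj

theorem exists_equiv_of_ideal {P : Finset (α × β) → Prop} (hP : ∀ f, P f → IsPartialInj f)
    (I : Order.Ideal {f // P f}) (hfst : ∀ a, ∃ f ∈ I, ∃ b, (a, b) ∈ f.1)
    (hsnd : ∀ b, ∃ f ∈ I, ∃ a, (a, b) ∈ f.1) :
    ∃ e : α ≃ β, (∀ f ∈ I, ∀ p ∈ f.1, e p.1 = p.2) ∧
      ∀ a a', ∃ f ∈ I, (a, e a) ∈ f.1 ∧ (a', e a') ∈ f.1 := by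
  have common : ∀ {p q : α × β}, (∃ f ∈ I, p ∈ f.1) → (∃ f ∈ I, q ∈ f.1) →
      ∃ f ∈ I, p ∈ f.1 ∧ q ∈ f.1 := by
    rintro p q ⟨f, hf, hp⟩ ⟨g, hg, hq⟩
    obtain ⟨h, hh, hfh, hgh⟩ := I.directed f hf g hg
    exact ⟨h, hh, hfh hp, hgh hq⟩
  have coherent : ∀ {p q : α × β}, (∃ f ∈ I, p ∈ f.1) → (∃ f ∈ I, q ∈ f.1) →
      (p.1 = q.1 ↔ p.2 = q.2) := by
    intro p q hp hq
    obtain ⟨f, -, hpf, hqf⟩ := common hp hq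
    exact hP f.1 f.2 p hpf q hqf
  have hfst' : ∀ a, ∃ b, ∃ f ∈ I, (a, b) ∈ f.1 := fun a => by
    obtain ⟨f, hf, b, hb⟩ := hfst a
    exact ⟨b, f, hf, hb⟩
  choose e₀ he₀ using hfst'
  have hinj : Function.Injective e₀ := fun a a' h => (coherent (he₀ a) (he₀ a')).2 h
  have hsurj : Function.Surjective e₀ := fun b =>
    let ⟨f, hf, a, ha⟩ := hsnd b
    ⟨a, (coherent (he₀ a) ⟨f, hf, ha⟩).1 rfl⟩
  refine ⟨Equiv.ofBijective e₀ ⟨hinj, hsurj⟩, fun f hf p hp => ?_,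
    fun a a' => common (he₀ a) (he₀ a')⟩
  exact (coherent (he₀ p.1) ⟨f, hf, hp⟩).1 rfl

end PartialInj

namespace SimpleGraph

variable {V W : Type*}

def HasExtensionProperty (G : SimpleGraph W) : Prop :=
  ∀ A B : Finset W, Disjoint A B → ∃ v ∉ B, (∀ a ∈ A, G.Adj v a) ∧ ∀ b ∈ B, ¬G.Adj v b

namespace HasExtensionProperty

variable {G : SimpleGraph W}

theorem exists_fresh [DecidableEq W] (hG : G.HasExtensionProperty) {A B : Finset W}
    (hAB : Disjoint A B) (T : Finset W) :
    ∃ v ∉ T, v ∉ B ∧ (∀ a ∈ A, G.Adj v a) ∧ (∀ b ∈ B, ¬G.Adj v b) ∧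
      ∀ t ∈ T, G.Adj v t → t ∈ A := by
  obtain ⟨v, hv, hA, hB⟩ :=
    hG A (B ∪ (T \ A)) (disjoint_union_right.2 ⟨hAB, disjoint_sdiff⟩)
  have hT : ∀ t ∈ T, t ∉ A → t ∈ B ∪ (T \ A) := fun t ht htA =>
    mem_union_right _ (mem_sdiff.2 ⟨ht, htA⟩)
  refine ⟨v, fun hvT => ?_, fun hvB => hv (mem_union_left _ hvB), hA,
    fun b hb => hB b (mem_union_left _ hb), fun t ht hvt => ?_⟩
  · exact hv (hT v hvT fun hvA => G.irrefl (hA v hvA))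
  · exact by_contra fun htA => hB t (hT t ht htA) hvt

theorem exists_adj_iff [DecidableEq W] (hG : G.HasExtensionProperty) (F : SimpleGraph V)
    {f : Finset (V × W)} (hf : IsPartialInj f) (a : V) :
    ∃ b ∉ f.image Prod.snd, ∀ p ∈ f, F.Adj a p.1 ↔ G.Adj b p.2 := by
  classical
  obtain ⟨b, hbT, -, hA, -, hT⟩ :=
    hG.exists_fresh (disjoint_empty_right ((f.filter fun p => F.Adj a p.1).image Prod.snd))
      (f.image Prod.snd)
  refine ⟨b, hbT, fun p hp => ⟨fun h => hA _ (mem_image_of_mem _ (mem_filter.2 ⟨hp, h⟩)),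
    fun h => ?_⟩⟩
  obtain ⟨q, hq, hqp⟩ := mem_image.1 (hT _ (mem_image_of_mem _ hp) h)
  rw [mem_filter] at hq
  exact (hf q hq.1 p hp).2 hqp ▸ hq.2

end HasExtensionProperty

end SimpleGraph

open SimpleGraph

theorem rado_adj_iff_testBit_of_lt {i j : ℕ} (h : i < j) : Rado.Adj j i ↔ j.testBit i := by
  simp [Rado, fromRel_adj, h, h.ne', not_lt_of_gt h]

theorem Nat.testBit_sum_two_pow (s : Finset ℕ) (i : ℕ) :
    (∑ j ∈ s, 2 ^ j).testBit i ↔ i ∈ s := by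
  rw [← Nat.mem_bitIndices, ← List.mem_toFinset, toFinset_bitIndices_sum_two_pow]

theorem rado_hasExtensionProperty : Rado.HasExtensionProperty := by
  intro A B hAB
  obtain ⟨N, hN⟩ := exists_nat_subset_range (A ∪ B)
  have hNB : N ∉ B := fun h => lt_irrefl N (mem_range.1 (hN (mem_union_right A h)))
  set v := ∑ i ∈ insert N A, 2 ^ i
  have hlt : ∀ x ∈ A ∪ B, x < v := fun x hx =>
    (mem_range.1 (hN hx)).trans (lt_geomSum_of_mem le_rfl (mem_insert_self N A))
  refine ⟨v, fun hv => lt_irrefl v (hlt v (mem_union_right A hv)), fun a ha => ?_,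
    fun b hb => ?_⟩
  · rw [rado_adj_iff_testBit_of_lt (hlt a (mem_union_left B ha)), Nat.testBit_sum_two_pow]
    exact mem_insert_of_mem ha
  · rw [rado_adj_iff_testBit_of_lt (hlt b (mem_union_right A hb)), Nat.testBit_sum_two_pow,
      mem_insert]
    rintro (rfl | hbA)
    · exact hNB hb
    · exact disjoint_left.1 hAB hbA hb

namespace SimpleGraph

variable {V W : Type*}

def IsPartialIso (G : SimpleGraph V) (H : SimpleGraph W) (f : Finset (V × W)) : Prop :=
  IsPartialInj f ∧ ∀ p ∈ f, ∀ q ∈ f, G.Adj p.1 q.1 ↔ H.Adj p.2 q.2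

namespace IsPartialIso

variable {G : SimpleGraph V} {H : SimpleGraph W} {f : Finset (V × W)}

theorem insert [DecidableEq V] [DecidableEq W] (hf : IsPartialIso G H f) {a : V} {b : W}
    (ha : a ∉ f.image Prod.fst) (hb : b ∉ f.image Prod.snd)
    (hadj : ∀ p ∈ f, G.Adj a p.1 ↔ H.Adj b p.2) : IsPartialIso G H (insert (a, b) f) := by
  refine ⟨hf.1.insert ha hb, ?_⟩
  simp only [forall_mem_insert]
  exact ⟨⟨by simp, hadj⟩, fun p hp => ⟨by rw [G.adj_comm, H.adj_comm]; exact hadj p hp, hf.2 p hp⟩⟩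

theorem isCofinal_mem_fst (hH : H.HasExtensionProperty) (a : V) :
    IsCofinal {f : {f // IsPartialIso G H f} | ∃ b, (a, b) ∈ f.1} := by
  classical
  rintro ⟨f, hf⟩
  by_cases ha : a ∈ f.image Prod.fst
  · obtain ⟨p, hp, rfl⟩ := mem_image.1 ha
    exact ⟨⟨f, hf⟩, ⟨p.2, hp⟩, le_rfl⟩
  obtain ⟨b, hb, hadj⟩ := hH.exists_adj_iff G hf.1 a
  exact ⟨⟨_, hf.insert ha hb hadj⟩, ⟨b, mem_insert_self _ _⟩, subset_insert _ _⟩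

theorem isCofinal_mem_snd (hG : G.HasExtensionProperty) (b : W) :
    IsCofinal {f : {f // IsPartialIso G H f} | ∃ a, (a, b) ∈ f.1} := by
  classical
  rintro ⟨f, hf⟩
  by_cases hb : b ∈ f.image Prod.snd
  · obtain ⟨p, hp, rfl⟩ := mem_image.1 hb
    exact ⟨⟨f, hf⟩, ⟨p.1, hp⟩, le_rfl⟩
  obtain ⟨a, ha, hadj⟩ := hG.exists_adj_iff H hf.1.image_swap b
  simp only [image_image, forall_mem_image] at ha hadj
  exact ⟨⟨_, hf.insert (a := a) ha hb fun p hp => (hadj hp).symm⟩, ⟨a, mem_insert_self _ _⟩,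
    subset_insert _ _⟩

end IsPartialIso

theorem HasExtensionProperty.nonempty_iso [Countable V] [Countable W] {G : SimpleGraph V}
    {H : SimpleGraph W} (hG : G.HasExtensionProperty) (hH : H.HasExtensionProperty) :
    Nonempty (G ≃g H) := by
  obtain ⟨_⟩ := nonempty_encodable (V ⊕ W)
  let cofinal : V ⊕ W → Order.Cofinal {f // IsPartialIso G H f}
    | .inl a => ⟨_, IsPartialIso.isCofinal_mem_fst hH a⟩
    | .inr b => ⟨_, IsPartialIso.isCofinal_mem_snd hG b⟩
  let I := Order.idealOfCofinals ⟨∅, by simp [IsPartialIso, IsPartialInj]⟩ cofinal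
  obtain ⟨e, -, he⟩ := exists_equiv_of_ideal (fun _ hf => hf.1) I
    (fun a => (Order.cofinal_meets_idealOfCofinals _ cofinal (.inl a)).imp fun _ h => h.symm)
    (fun b => (Order.cofinal_meets_idealOfCofinals _ cofinal (.inr b)).imp fun _ h => h.symm)
  refine ⟨⟨e, fun {a a'} => ?_⟩⟩
  obtain ⟨f, -, ha, ha'⟩ := he a a'
  exact (f.2.2 _ ha _ ha').symm

variable {F : SimpleGraph V} {G : SimpleGraph W}

theorem exists_notMem_forall_not_adj (hdom : ∀ D : Set V, IsDominatingSet F D → D.Infinite)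
    (s : Finset V) : ∃ w ∉ s, ∀ u ∈ s, ¬F.Adj w u := by
  by_contra! h
  exact hdom s h s.finite_toSet

def IsPartialEmbedding (F : SimpleGraph V) (G : SimpleGraph W) (f : Finset (V × W)) : Prop :=
  IsPartialInj f ∧ ∀ p ∈ f, ∀ q ∈ f, F.Adj p.1 q.1 → G.Adj p.2 q.2

/-- Once `f` is contained in a bijection `e`, the pair `(w, v) ∈ f` witnesses the extension
property of `G \ F.map e` for `(A, B)`: the preimages of `A` are already fixed and none of them is
adjacent to `w`. -/
def HasExtensionWitness (F : SimpleGraph V) (G : SimpleGraph W) (A B : Finset W)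
    (f : Finset (V × W)) : Prop :=
  ∃ w v, (w, v) ∈ f ∧ v ∉ B ∧ (∀ b ∈ B, ¬G.Adj v b) ∧
    ∀ a ∈ A, G.Adj v a ∧ ∃ u, (u, a) ∈ f ∧ ¬F.Adj w u

namespace IsPartialEmbedding

variable {f : Finset (V × W)}

theorem insert [DecidableEq V] [DecidableEq W] (hf : IsPartialEmbedding F G f) {a : V} {b : W}
    (ha : a ∉ f.image Prod.fst) (hb : b ∉ f.image Prod.snd)
    (hadj : ∀ p ∈ f, F.Adj a p.1 → G.Adj b p.2) : IsPartialEmbedding F G (insert (a, b) f) := by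
  refine ⟨hf.1.insert ha hb, ?_⟩
  simp only [forall_mem_insert]
  exact ⟨⟨fun h => (F.irrefl h).elim, hadj⟩,
    fun p hp => ⟨fun h => (hadj p hp h.symm).symm, hf.2 p hp⟩⟩

theorem isCofinal_mem_fst (hG : G.HasExtensionProperty) (a : V) :
    IsCofinal {f : {f // IsPartialEmbedding F G f} | ∃ b, (a, b) ∈ f.1} := by
  classical
  rintro ⟨f, hf⟩
  by_cases ha : a ∈ f.image Prod.fst
  · obtain ⟨p, hp, rfl⟩ := mem_image.1 ha
    exact ⟨⟨f, hf⟩, ⟨p.2, hp⟩, le_rfl⟩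
  obtain ⟨b, hb, hadj⟩ := hG.exists_adj_iff F hf.1 a
  exact ⟨⟨_, hf.insert ha hb fun p hp => (hadj p hp).1⟩, ⟨b, mem_insert_self _ _⟩,
    subset_insert _ _⟩

/-- Each new vertex of `G` is matched with a vertex of `F` that has no neighbour in the current
domain; it exists because the domain is finite, hence not dominating. -/
theorem exists_superset_forall_mem_snd
    (hdom : ∀ D : Set V, IsDominatingSet F D → D.Infinite) (hf : IsPartialEmbedding F G f)
    (T : Finset W) : ∃ g, IsPartialEmbedding F G g ∧ f ⊆ g ∧ ∀ b ∈ T, ∃ a, (a, b) ∈ g := by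
  classical
  induction T using Finset.induction_on with
  | empty => exact ⟨f, hf, subset_rfl, by simp⟩
  | insert b T _ ih =>
    obtain ⟨g, hg, hfg, hTg⟩ := ih
    simp only [forall_mem_insert]
    by_cases hb : b ∈ g.image Prod.snd
    · obtain ⟨p, hp, rfl⟩ := mem_image.1 hb
      exact ⟨g, hg, hfg, ⟨p.1, hp⟩, hTg⟩
    obtain ⟨w, hw, hwadj⟩ := exists_notMem_forall_not_adj hdom (g.image Prod.fst)
    refine ⟨_, hg.insert hw hb fun p hp h => (hwadj _ (mem_image_of_mem _ hp) h).elim,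
      hfg.trans (subset_insert _ _), ⟨w, mem_insert_self _ _⟩, fun c hc => ?_⟩
    obtain ⟨a, ha⟩ := hTg c hc
    exact ⟨a, mem_insert_of_mem ha⟩

theorem isCofinal_mem_snd (hdom : ∀ D : Set V, IsDominatingSet F D → D.Infinite) (b : W) :
    IsCofinal {f : {f // IsPartialEmbedding F G f} | ∃ a, (a, b) ∈ f.1} := by
  rintro ⟨f, hf⟩
  obtain ⟨g, hg, hfg, hbg⟩ := hf.exists_superset_forall_mem_snd hdom {b}
  exact ⟨⟨g, hg⟩, hbg b (mem_singleton_self b), hfg⟩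

theorem isCofinal_hasExtensionWitness (hdom : ∀ D : Set V, IsDominatingSet F D → D.Infinite)
    (hG : G.HasExtensionProperty) {A B : Finset W} (hAB : Disjoint A B) :
    IsCofinal {f : {f // IsPartialEmbedding F G f} | HasExtensionWitness F G A B f.1} := by
  classical
  rintro ⟨f, hf⟩
  obtain ⟨g, hg, hfg, hAg⟩ := hf.exists_superset_forall_mem_snd hdom A
  obtain ⟨w, hw, hwadj⟩ := exists_notMem_forall_not_adj hdom (g.image Prod.fst)
  obtain ⟨v, hv, hvB, hA, hB, -⟩ := hG.exists_fresh hAB (g.image Prod.snd)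
  refine ⟨⟨_, hg.insert hw hv fun p hp h => (hwadj _ (mem_image_of_mem _ hp) h).elim⟩,
    ⟨w, v, mem_insert_self _ _, hvB, hB, fun a ha => ⟨hA a ha, ?_⟩⟩,
    hfg.trans (subset_insert _ _)⟩
  obtain ⟨u, hu⟩ := hAg a ha
  exact ⟨u, mem_insert_of_mem hu, hwadj _ (mem_image_of_mem _ hu)⟩

end IsPartialEmbedding

theorem HasExtensionProperty.exists_equiv_map_le_sdiff [Countable V] [Countable W]
    (hdom : ∀ D : Set V, IsDominatingSet F D → D.Infinite) (hG : G.HasExtensionProperty)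
    {u₀ w₀ : V} (huw : F.Adj u₀ w₀) {x y : W} (hxy : G.Adj x y) :
    ∃ e : V ≃ W, e u₀ = x ∧ e w₀ = y ∧ F.map e ≤ G ∧ (G \ F.map e).HasExtensionProperty := by
  classical
  obtain ⟨_⟩ := nonempty_encodable (V ⊕ W ⊕ {AB : Finset W × Finset W // Disjoint AB.1 AB.2})
  let cofinal : V ⊕ W ⊕ {AB : Finset W × Finset W // Disjoint AB.1 AB.2} →
      Order.Cofinal {f // IsPartialEmbedding F G f}
    | .inl a => ⟨_, IsPartialEmbedding.isCofinal_mem_fst hG a⟩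
    | .inr (.inl b) => ⟨_, IsPartialEmbedding.isCofinal_mem_snd hdom b⟩
    | .inr (.inr AB) => ⟨_, IsPartialEmbedding.isCofinal_hasExtensionWitness hdom hG AB.2⟩
  have hf₀ : IsPartialEmbedding F G {(u₀, x), (w₀, y)} := by
    refine ⟨?_, ?_⟩ <;> simp [IsPartialInj, huw.ne, huw.ne', hxy.ne, hxy.ne', hxy, hxy.symm]
  let I := Order.idealOfCofinals ⟨_, hf₀⟩ cofinal
  obtain ⟨e, he, hpair⟩ := exists_equiv_of_ideal (fun _ hf => hf.1) I
    (fun a => (Order.cofinal_meets_idealOfCofinals _ cofinal (.inl a)).imp fun _ h => h.symm)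
    (fun b => (Order.cofinal_meets_idealOfCofinals _ cofinal (.inr (.inl b))).imp
      fun _ h => h.symm)
  have he₀ := he _ (Order.mem_idealOfCofinals _ cofinal)
  have hmap : ∀ a a', (F.map e).Adj (e a) (e a') ↔ F.Adj a a' := fun _ _ =>
    (Iso.map e F).map_adj_iff
  refine ⟨e, he₀ (u₀, x) (by simp), he₀ (w₀, y) (by simp), ?_, ?_⟩
  · intro v v' h
    rw [← e.apply_symm_apply v, ← e.apply_symm_apply v', hmap] at h
    obtain ⟨f, -, ha, ha'⟩ := hpair (e.symm v) (e.symm v')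
    simpa using f.2.2 _ ha _ ha' h
  · intro A B hAB
    obtain ⟨f, ⟨w, v, hwv, hvB, hB, hA⟩, hfI⟩ :=
      Order.cofinal_meets_idealOfCofinals _ cofinal (.inr (.inr ⟨(A, B), hAB⟩))
    refine ⟨v, hvB, fun a ha => ?_, fun b hb h => hB b hb ((sdiff_adj _ _ _ _).1 h).1⟩
    obtain ⟨hva, u, hua, hwu⟩ := hA a ha
    obtain rfl : e w = v := he f hfI _ hwv
    obtain rfl : e u = a := he f hfI _ hua
    rw [sdiff_adj, hmap]
    exact ⟨hva, hwu⟩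

end SimpleGraph

/-- if `F` is a countable (non-empty) graph with no finite dominating
set, then for every edge `e` of the Rado graph `R` there is an embedding of `F`
onto a spanning subgraph `Γ` of `R` containing `e`, such that `R \ Γ` is
isomorphic to `R`. -/
theorem stmt_5 {V : Type*} [Countable V] (F : SimpleGraph V)
    (hdom : ∀ D : Set V, IsDominatingSet F D → D.Infinite)
    (hne : F.edgeSet.Nonempty) :
    ∀ e ∈ Rado.edgeSet, ∃ Γ : SimpleGraph ℕ,
      Γ ≤ Rado ∧ Nonempty (F ≃g Γ) ∧ e ∈ Γ.edgeSet ∧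
        Nonempty ((Rado \ Γ) ≃g Rado) := by
  obtain ⟨⟨u₀, w₀⟩, huw⟩ := hne
  rintro ⟨x, y⟩ hxy
  obtain ⟨e, rfl, rfl, hle, hEP⟩ :=
    rado_hasExtensionProperty.exists_equiv_map_le_sdiff hdom huw hxy
  exact ⟨F.map e, hle, ⟨Iso.map e F⟩, (Iso.map e F).map_adj_iff.2 huw,
    hEP.nonempty_iso rado_hasExtensionProperty⟩
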